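/- arXiv:2411.19164 — 4 statements merged into one kernel-verified Lean document; each statement's English description precedes it below -/
import Mathlib

section
/- Let p be a prime, d ∈ ℕ, τ ∈ (0,1), α > 1/2, and let γ = (γ_u) be weights with 0 < γ_u ≤ 1 for every nonempty u ⊆ {1,…,d}. Then there exists a subset Z ⊆ {1,…,p−1}^d with |Z| ≥ ⌈τ (p−1)^d⌉ such that for every z ∈ Z, E(p,z) ≤ inf_{1/2 ≤ λ < α} ( (2/((1−τ)(p−1))) · V_d(α/λ, γ^{1/λ}) )^λ. -/
open scoped BigOperators Classical

noncomputable section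

/-- Real Riemann zeta value `ζ(β) = Σ_{k≥1} k^{-β}` (for `β > 1`). -/
def zetaR (β : ℝ) : ℝ := ∑' k : ℕ, ((k + 1 : ℝ)) ^ (-β)

/-- Support of a frequency vector. -/
def suppF {d : ℕ} (h : Fin d → ℤ) : Finset (Fin d) := Finset.univ.filter (fun j => h j ≠ 0)

/-- The Korobov weight function `r_{d,α,γ}`. -/
def rKor (d : ℕ) (α : ℝ) (γ : Finset (Fin d) → ℝ) (h : Fin d → ℤ) : ℝ :=
  if h = 0 then 1 else (γ (suppF h))⁻¹ * ∏ j ∈ suppF h, |(h j : ℝ)| ^ α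

/-- `V_d(β, γ) = Σ_{∅ ≠ u ⊆ {1,…,d}} γ_u (2ζ(β))^{|u|}`. -/
def Vd (d : ℕ) (β : ℝ) (γ : Finset (Fin d) → ℝ) : ℝ :=
  ∑ u ∈ Finset.univ.filter (fun u : Finset (Fin d) => u.Nonempty), γ u * (2 * zetaR β) ^ u.card

/-- The set of generating vectors `{1,…,p-1}^d`. -/
def genSet (d p : ℕ) : Finset (Fin d → ℤ) :=
  Fintype.piFinset (fun _ => Finset.Icc (1 : ℤ) ((p : ℤ) - 1))

/-- Nonzero dual lattice points: `h ≠ 0` with `h·z ≡ 0 (mod p)`. -/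
def dualLat (d p : ℕ) (z : Fin d → ℤ) : Set (Fin d → ℤ) :=
  {h | h ≠ 0 ∧ (p : ℤ) ∣ ∑ j, h j * z j}

/-- Worst-case error of the lattice rule `Q_p^z` on the Korobov class. -/
def Edet (d : ℕ) (α : ℝ) (γ : Finset (Fin d) → ℝ) (p : ℕ) (z : Fin d → ℤ) : ℝ :=
  Real.sqrt (∑' h : dualLat d p z, ((rKor d α γ h.1) ^ 2)⁻¹)

/-- Quadrature error of the lattice rule `Q_p^z` on the function with
Fourier coefficients `a`. -/
def err (d p : ℕ) (z : Fin d → ℤ) (a : (Fin d → ℤ) → ℂ) : ℂ :=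
  ∑' h : dualLat d p z, a h.1

/-- The Korobov norm of the coefficient sequence `a`. -/
def korNorm (d : ℕ) (α : ℝ) (γ : Finset (Fin d) → ℝ) (a : (Fin d → ℤ) → ℂ) : ℝ :=
  Real.sqrt (∑' h : Fin d → ℤ, (rKor d α γ h) ^ 2 * ‖a h‖ ^ 2)

/-- Membership of the coefficient sequence in the Korobov class (`‖a‖ < ∞`). -/
def korSummable (d : ℕ) (α : ℝ) (γ : Finset (Fin d) → ℝ) (a : (Fin d → ℤ) → ℂ) : Prop :=
  Summable (fun h : Fin d → ℤ => (rKor d α γ h) ^ 2 * ‖a h‖ ^ 2)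

/-- The median (the `(N+1)/2`-th smallest value for odd `N`). -/
def medianR {N : ℕ} (f : Fin N → ℝ) : ℝ :=
  (List.insertionSort (· ≤ ·) (List.ofFn f)).getD ((N - 1) / 2) 0

/-- The median of complex numbers: medians of real and imaginary parts. -/
def medianC {N : ℕ} (f : Fin N → ℂ) : ℂ :=
  (medianR fun k => (f k).re) + (medianR fun k => (f k).im) * Complex.I

/-- The set `P_n` of primes `p` with `⌈n/2⌉ + 1 ≤ p ≤ n`. -/
def Pset (n : ℕ) : Finset ℕ := (Finset.Icc ((n + 1) / 2 + 1) n).filter Nat.Prime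

/-- The sample space of a single draw: pairs `(p, z)` with `p ∈ P_n`,
`z ∈ {1,…,p-1}^d`. -/
def allPairs (n d : ℕ) : Finset ((_ : ℕ) × (Fin d → ℤ)) :=
  (Pset n).sigma (fun p => genSet d p)

/-- The probability of one pair `(p,z)`: `p` uniform on `P_n`, and given `p`,
`z` uniform on `{1,…,p-1}^d`. -/
def pairWeight (n d : ℕ) (pz : (_ : ℕ) × (Fin d → ℤ)) : ℝ :=
  (((Pset n).card : ℝ))⁻¹ * (((pz.1 : ℝ) - 1) ^ d)⁻¹

/-- Number of repetitions used by the median algorithm `M_n`. -/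
def numReps (h : ℕ → ℝ) (n : ℕ) : ℕ := 2 * ⌈h n * Real.logb 2 n⌉₊ + 1

/-- Expectation, over the `N` independent draws of the median algorithm,
of a function `g` of the draws. -/
def expDraws (n d N : ℕ) (g : (Fin N → (_ : ℕ) × (Fin d → ℤ)) → ℝ) : ℝ :=
  ∑ ω ∈ Fintype.piFinset (fun _ : Fin N => allPairs n d),
    (∏ k, pairWeight n d (ω k)) * g ω

/-- Product weights `γ_u = ∏_{j ∈ u} γ_j`. -/
def prodW (d : ℕ) (γ : ℕ → ℝ) : Finset (Fin d) → ℝ := fun u => ∏ j ∈ u, γ (j : ℕ)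

/-!
Fix `λ ∈ [1/2, α)`. Since `r_{d,α,γ}(h)^{1/λ} = r_{d,α/λ,γ^{1/λ}}(h)` and `2λ ≥ 1`, the inclusion
`ℓ¹ ⊆ ℓ^{2λ}` gives `E(p,z)^{1/λ} ≤ S(z) := Σ_{h ∈ L⊥(z)} r_{d,α/λ,γ^{1/λ}}(h)⁻¹`. Averaged over
`z ∈ {1,…,p-1}^d`, `S` is at most `2 V_d(α/λ, γ^{1/λ}) / (p-1)`: a frequency `h ∉ pℤ^d` is dual to
at most `(p-1)^{d-1}` generating vectors, and the frequencies in `pℤ^d` are damped by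
`p^{-α/λ} ≤ 1/p`. Markov's inequality then gives the bound for at least `τ (p-1)^d` vectors.

A single set `Z` serves all `λ` at once: take the `⌈τ (p-1)^d⌉` vectors of smallest error. If
`z ∈ Z` missed the bound for some `λ`, the good set for that `λ`, being at least as large as `Z`,
would contain some `z' ∉ Z`, and `E(p,z) ≤ E(p,z')`.
-/

open Finset
open scoped ENNReal

theorem ENNReal.tsum_rpow_le_rpow_tsum {ι : Type*} (f : ι → ℝ≥0∞) {s : ℝ} (hs : 1 ≤ s) :
    ∑' i, f i ^ s ≤ (∑' i, f i) ^ s := by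
  have hsplit : ∀ x : ℝ≥0∞, x ^ s = x ^ (s - 1) * x := fun x => by
    conv_lhs => rw [← sub_add_cancel s 1]
    rw [ENNReal.rpow_add_of_nonneg _ _ (by linarith) zero_le_one, ENNReal.rpow_one]
  calc ∑' i, f i ^ s ≤ ∑' i, (∑' j, f j) ^ (s - 1) * f i := by
        refine ENNReal.tsum_le_tsum fun i => ?_
        rw [hsplit]
        gcongr
        exact ENNReal.le_tsum i
    _ = (∑' i, f i) ^ s := by rw [ENNReal.tsum_mul_left, ← hsplit]

theorem Finset.card_filter_lt_le_of_sum_le {ι : Type*} (s : Finset ι) (f : ι → ℝ≥0∞)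
    {c t : ℝ≥0∞} (h : ∑ x ∈ s, f x ≤ c * t) : (#(s.filter fun x => t < f x) : ℝ≥0∞) ≤ c := by
  rcases eq_or_ne t 0 with rfl | ht0
  · have hzero : ∀ x ∈ s, f x = 0 := by simpa using h
    rw [filter_false_of_mem fun x hx => by simp [hzero x hx]]
    simp
  rcases eq_or_ne t ⊤ with rfl | httop
  · simp
  refine (ENNReal.mul_le_mul_iff_left ht0 httop).mp ?_
  calc (#(s.filter fun x => t < f x) : ℝ≥0∞) * t = ∑ x ∈ s.filter (fun x => t < f x), t := by
        rw [sum_const, nsmul_eq_mul]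
    _ ≤ ∑ x ∈ s.filter (fun x => t < f x), f x := sum_le_sum fun x hx => (mem_filter.mp hx).2.le
    _ ≤ ∑ x ∈ s, f x := sum_le_sum_of_subset (filter_subset _ _)
    _ ≤ c * t := h

theorem Finset.exists_subset_card_eq_forall_le {ι : Type*} (s : Finset ι) (f : ι → ℝ) {m : ℕ}
    (hm : m ≤ #s) : ∃ Z ⊆ s, #Z = m ∧ ∀ z ∈ Z, ∀ z' ∈ s \ Z, f z ≤ f z' := by
  induction m with
  | zero => exact ⟨∅, empty_subset _, card_empty, by simp⟩
  | succ m ih =>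
    obtain ⟨Z, hZs, hZcard, hZlow⟩ := ih (Nat.le_of_succ_le hm)
    obtain ⟨z₀, hz₀, hmin⟩ := exists_min_image (s \ Z) f
      (card_pos.mp (by rw [card_sdiff_of_subset hZs]; omega))
    have hz₀Z : z₀ ∉ Z := (mem_sdiff.mp hz₀).2
    refine ⟨insert z₀ Z, insert_subset (mem_sdiff.mp hz₀).1 hZs,
      by rw [card_insert_of_notMem hz₀Z, hZcard], fun z hz z' hz' => ?_⟩
    rw [mem_sdiff, mem_insert, not_or] at hz'
    rcases mem_insert.mp hz with rfl | hzZ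
    · exact hmin z' (mem_sdiff.mpr ⟨hz'.1, hz'.2.2⟩)
    · exact hZlow z hzZ z' (mem_sdiff.mpr ⟨hz'.1, hz'.2.2⟩)

theorem Finset.le_of_card_le_card_filter_le {ι : Type*} {s Z : Finset ι} {f : ι → ℝ}
    (hZ : ∀ z ∈ Z, ∀ z' ∈ s \ Z, f z ≤ f z') {B : ℝ} (hcard : #Z ≤ #(s.filter fun x => f x ≤ B))
    {z : ι} (hz : z ∈ Z) : f z ≤ B := by
  by_contra hzB
  have hnot : ¬(s.filter fun x => f x ≤ B) ⊆ Z := fun hsub =>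
    (card_lt_card ((ssubset_iff_of_subset hsub).mpr
      ⟨z, hz, fun h => hzB (mem_filter.mp h).2⟩)).not_ge hcard
  obtain ⟨z', hz', hz'Z⟩ := not_subset.mp hnot
  rw [mem_filter] at hz'
  exact hzB ((hZ z hz z' (mem_sdiff.mpr ⟨hz'.1, hz'Z⟩)).trans hz'.2)

theorem ENNReal.tsum_pi_fin_prod {α : Type*} (n : ℕ) (c : Fin n → α → ℝ≥0∞) :
    ∑' h : Fin n → α, ∏ j, c j (h j) = ∏ j, ∑' k, c j k := by
  induction n with
  | zero => simp
  | succ n ih =>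
    rw [← (Fin.consEquiv (fun _ : Fin (n + 1) => α)).tsum_eq]
    simp only [Fin.prod_univ_succ, Fin.consEquiv_apply, Fin.cons_zero, Fin.cons_succ]
    rw [ENNReal.tsum_prod'
        (f := fun x : α × (Fin n → α) => c 0 x.1 * ∏ j : Fin n, c j.succ (x.2 j)),
      ← ih (fun j => c j.succ), ← ENNReal.tsum_mul_right]
    simp only [ENNReal.tsum_mul_left]

lemma zetaR_nonneg (β : ℝ) : 0 ≤ zetaR β :=
  tsum_nonneg fun _ => Real.rpow_nonneg (by positivity) _

def freqWeight (β : ℝ) (k : ℤ) : ℝ≥0∞ := if k = 0 then 0 else ENNReal.ofReal (|(k : ℝ)| ^ (-β))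

lemma tsum_freqWeight {β : ℝ} (hβ : 1 < β) :
    ∑' k : ℤ, freqWeight β k = ENNReal.ofReal (2 * zetaR β) := by
  have hsum : Summable fun k : ℕ => ((k + 1 : ℝ)) ^ (-β) := by
    simpa using (summable_nat_add_iff 1).2 (Real.summable_nat_rpow.2 (by linarith : -β < -1))
  have hpos : ∀ k : ℕ, freqWeight β (k + 1) = ENNReal.ofReal (((k + 1 : ℝ)) ^ (-β)) := by
    intro k
    rw [freqWeight, if_neg (by omega)]
    push_cast
    rw [abs_of_pos (by positivity)]
  have hneg : ∀ k : ℕ, freqWeight β (-(k + 1)) = ENNReal.ofReal (((k + 1 : ℝ)) ^ (-β)) := by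
    intro k
    rw [freqWeight, if_neg (by omega)]
    push_cast
    rw [abs_neg, abs_of_pos (by positivity)]
  have hzeta : ∑' k : ℕ, ENNReal.ofReal (((k + 1 : ℝ)) ^ (-β)) = ENNReal.ofReal (zetaR β) :=
    (ENNReal.ofReal_tsum_of_nonneg (fun _ => Real.rpow_nonneg (by positivity) _) hsum).symm
  rw [tsum_of_add_one_of_neg_add_one ENNReal.summable ENNReal.summable]
  simp only [hpos, hneg, hzeta]
  rw [freqWeight, if_pos rfl, add_zero]
  rw [two_mul, ENNReal.ofReal_add (zetaR_nonneg β) (zetaR_nonneg β)]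


section KorobovWeight

variable {d : ℕ}

lemma mem_suppF {h : Fin d → ℤ} {j : Fin d} : j ∈ suppF h ↔ h j ≠ 0 := by
  simp [suppF]

lemma suppF_nonempty {h : Fin d → ℤ} (hh : h ≠ 0) : (suppF h).Nonempty := by
  obtain ⟨j, hj⟩ := Function.ne_iff.mp hh
  exact ⟨j, mem_suppF.mpr hj⟩

lemma inv_rKor_of_ne_zero (α : ℝ) (γ : Finset (Fin d) → ℝ) {h : Fin d → ℤ} (hh : h ≠ 0) :
    (rKor d α γ h)⁻¹ = γ (suppF h) * ∏ j ∈ suppF h, |(h j : ℝ)| ^ (-α) := by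
  rw [rKor, if_neg hh, mul_inv, inv_inv, ← prod_inv_distrib]
  congr 1
  exact prod_congr rfl fun j _ => (Real.rpow_neg (abs_nonneg _) α).symm

def rKorInv (d : ℕ) (β : ℝ) (γ : Finset (Fin d) → ℝ) (h : Fin d → ℤ) : ℝ≥0∞ :=
  if h = 0 then 0 else ENNReal.ofReal (rKor d β γ h)⁻¹

lemma prod_freqWeight_eq_ite (β : ℝ) (u : Finset (Fin d)) (h : Fin d → ℤ) :
    ∏ j, (if j ∈ u then freqWeight β (h j) else if h j = 0 then 1 else 0) =
      if suppF h = u then ∏ j ∈ u, ENNReal.ofReal (|(h j : ℝ)| ^ (-β)) else 0 := by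
  split_ifs with hu
  · subst hu
    rw [← prod_mul_prod_compl (suppF h), prod_congr rfl fun j hj => if_neg (mem_compl.mp hj),
      prod_congr rfl fun j hj => if_pos (not_not.mp (mem_suppF.not.mp (mem_compl.mp hj))),
      prod_const_one, mul_one]
    refine prod_congr rfl fun j hj => ?_
    rw [if_pos hj, freqWeight, if_neg (mem_suppF.mp hj)]
  · obtain ⟨j, hj⟩ : ∃ j, ¬(j ∈ suppF h ↔ j ∈ u) := by
      simpa [Finset.ext_iff] using hu
    refine prod_eq_zero (mem_univ j) ?_
    by_cases hju : j ∈ u <;> simp_all [mem_suppF, freqWeight]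

lemma rKorInv_eq_sum (β : ℝ) (γ : Finset (Fin d) → ℝ)
    (hγ : ∀ u : Finset (Fin d), u.Nonempty → 0 ≤ γ u) (h : Fin d → ℤ) :
    rKorInv d β γ h = ∑ u ∈ univ.filter (fun u : Finset (Fin d) => u.Nonempty),
      ENNReal.ofReal (γ u) *
        ∏ j, (if j ∈ u then freqWeight β (h j) else if h j = 0 then 1 else 0) := by
  simp only [prod_freqWeight_eq_ite, mul_ite, mul_zero]
  rw [sum_ite_eq]
  by_cases hh : h = 0
  · rw [rKorInv, if_pos hh, if_neg]
    simp [hh, suppF]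
  · rw [rKorInv, if_neg hh, if_pos (by simpa using suppF_nonempty hh), inv_rKor_of_ne_zero β γ hh,
      ENNReal.ofReal_mul (hγ _ (suppF_nonempty hh)),
      ENNReal.ofReal_prod_of_nonneg fun j _ => Real.rpow_nonneg (abs_nonneg _) _]

lemma tsum_rKorInv {β : ℝ} (hβ : 1 < β) (γ : Finset (Fin d) → ℝ)
    (hγ : ∀ u : Finset (Fin d), u.Nonempty → 0 ≤ γ u) :
    ∑' h, rKorInv d β γ h = ENNReal.ofReal (Vd d β γ) := by
  have hfactor : ∀ u : Finset (Fin d), ∏ j, ∑' k : ℤ,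
      (if j ∈ u then freqWeight β k else if k = 0 then 1 else 0) =
        ENNReal.ofReal (2 * zetaR β) ^ u.card := by
    intro u
    have hsum : ∀ j, ∑' k : ℤ, (if j ∈ u then freqWeight β k else if k = 0 then 1 else 0) =
        if j ∈ u then ENNReal.ofReal (2 * zetaR β) else 1 := by
      intro j
      split_ifs
      · exact tsum_freqWeight hβ
      · exact tsum_ite_eq 0 1
    rw [prod_congr rfl fun j _ => hsum j, prod_ite_mem, univ_inter, prod_const]
  simp_rw [rKorInv_eq_sum β γ hγ]
  rw [Summable.tsum_finsetSum fun _ _ => ENNReal.summable, Vd,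
    ENNReal.ofReal_sum_of_nonneg fun u hu => mul_nonneg (hγ u (by simpa using hu))
      (pow_nonneg (mul_nonneg zero_le_two (zetaR_nonneg β)) _)]
  refine sum_congr rfl fun u hu => ?_
  rw [ENNReal.tsum_mul_left, ENNReal.tsum_pi_fin_prod d
    (fun j k => if j ∈ u then freqWeight β k else if k = 0 then 1 else 0), hfactor,
    ENNReal.ofReal_mul (hγ u (by simpa using hu)),
    ENNReal.ofReal_pow (mul_nonneg zero_le_two (zetaR_nonneg β))]

end KorobovWeight

section Counting

variable {d p : ℕ}

lemma card_genSet (d p : ℕ) : #(genSet d p) = (p - 1) ^ d := by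
  simp [genSet]

lemma mem_genSet {z : Fin d → ℤ} : z ∈ genSet d p ↔ ∀ j, z j ∈ Icc (1 : ℤ) (p - 1) :=
  Fintype.mem_piFinset

lemma eq_of_dvd_sub_of_mem_Icc {a b : ℤ} (hp : (p : ℤ) ∣ a - b) (ha : a ∈ Icc (1 : ℤ) (p - 1))
    (hb : b ∈ Icc (1 : ℤ) (p - 1)) : a = b := by
  rw [mem_Icc] at ha hb
  exact sub_eq_zero.mp (Int.eq_zero_of_abs_lt_dvd hp (abs_sub_lt_iff.mpr ⟨by omega, by omega⟩))

/-- Once the coordinates off `j₀` are fixed, `h · z ≡ 0 (mod p)` pins down `z j₀` modulo `p`. -/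
lemma card_filter_dvd_le (hp : p.Prime) {h : Fin d → ℤ} {j₀ : Fin d} (hj₀ : ¬(p : ℤ) ∣ h j₀) :
    #((genSet d p).filter fun z => (p : ℤ) ∣ ∑ j, h j * z j) ≤ (p - 1) ^ (d - 1) := by
  have hcard : #(Fintype.piFinset fun _ : {j : Fin d // j ≠ j₀} => Icc (1 : ℤ) (p - 1)) =
      (p - 1) ^ (d - 1) := by
    simp [Fintype.card_subtype_compl]
  rw [← hcard]
  refine card_le_card_of_injOn (fun z (j : {j : Fin d // j ≠ j₀}) => z j) ?_ ?_
  · intro z hz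
    rw [mem_coe, mem_filter] at hz
    exact Fintype.mem_piFinset.mpr fun j => mem_genSet.mp hz.1 j
  · intro z hz w hw hzw
    rw [mem_coe, mem_filter] at hz hw
    have hoff : ∀ j, j ≠ j₀ → z j = w j := fun j hj => congrFun hzw ⟨j, hj⟩
    have hdiff : ∑ j, h j * z j - ∑ j, h j * w j = h j₀ * (z j₀ - w j₀) := by
      rw [← sum_sub_distrib, sum_eq_single j₀ (fun j _ hj => by rw [hoff j hj, sub_self])
        (by simp)]
      ring
    have hdvd : (p : ℤ) ∣ z j₀ - w j₀ :=
      ((Nat.prime_iff_prime_int.mp hp).dvd_mul.mp (hdiff ▸ dvd_sub hz.2 hw.2)).resolve_left hj₀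
    funext j
    by_cases hj : j = j₀
    · subst hj
      exact eq_of_dvd_sub_of_mem_Icc hdvd (mem_genSet.mp hz.1 j) (mem_genSet.mp hw.1 j)
    · exact hoff j hj

end Counting

section LatticeAverage

variable {d p : ℕ}

lemma suppF_smul {c : ℤ} (hc : c ≠ 0) (m : Fin d → ℤ) : suppF (c • m) = suppF m := by
  ext j
  simp [mem_suppF, hc]

lemma rKorInv_smul_le {β : ℝ} (hβ : 0 ≤ β) (γ : Finset (Fin d) → ℝ)
    (hγ : ∀ u : Finset (Fin d), u.Nonempty → 0 ≤ γ u) (hp : 1 ≤ p) (m : Fin d → ℤ) :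
    rKorInv d β γ ((p : ℤ) • m) ≤ ENNReal.ofReal ((p : ℝ) ^ (-β)) * rKorInv d β γ m := by
  by_cases hm : m = 0
  · simp [hm, rKorInv]
  have hp0 : (p : ℤ) ≠ 0 := by exact_mod_cast (by omega : p ≠ 0)
  have hpm : (p : ℤ) • m ≠ 0 := smul_ne_zero hp0 hm
  have hpow : (p : ℝ) ^ (-β) ≤ 1 :=
    Real.rpow_le_one_of_one_le_of_nonpos (by exact_mod_cast hp) (by linarith)
  have hu := suppF_nonempty hm
  rw [rKorInv, if_neg hpm, rKorInv, if_neg hm, ← ENNReal.ofReal_mul (by positivity),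
    inv_rKor_of_ne_zero β γ hpm, inv_rKor_of_ne_zero β γ hm, suppF_smul hp0]
  refine ENNReal.ofReal_le_ofReal ?_
  have hscale : ∏ j ∈ suppF m, |(((p : ℤ) • m) j : ℝ)| ^ (-β) =
      ((p : ℝ) ^ (-β)) ^ #(suppF m) * ∏ j ∈ suppF m, |(m j : ℝ)| ^ (-β) := by
    rw [← prod_const, ← prod_mul_distrib]
    refine prod_congr rfl fun j _ => ?_
    simp [abs_mul, Real.mul_rpow]
  rw [hscale, mul_left_comm]
  refine mul_le_mul_of_nonneg_right ?_ (mul_nonneg (hγ _ hu) (prod_nonneg fun _ _ => by positivity))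
  exact pow_le_of_le_one (by positivity) hpow (card_pos.mpr hu).ne'

lemma sub_one_mul_rpow_neg_le_one {x β : ℝ} (hx : 1 ≤ x) (hβ : 1 ≤ β) :
    (x - 1) * x ^ (-β) ≤ 1 := by
  have : x ^ (-β) ≤ x⁻¹ := by
    rw [← Real.rpow_neg_one]
    exact Real.rpow_le_rpow_of_exponent_le hx (by linarith)
  calc (x - 1) * x ^ (-β) ≤ (x - 1) * x⁻¹ := mul_le_mul_of_nonneg_left this (by linarith)
    _ ≤ 1 := by rw [← div_eq_mul_inv, div_le_one (by linarith)]; linarith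

def dualSum (d p : ℕ) (β : ℝ) (γ : Finset (Fin d) → ℝ) (z : Fin d → ℤ) : ℝ≥0∞ :=
  ∑' h : dualLat d p z, rKorInv d β γ h

lemma dualSum_eq_tsum_ite (β : ℝ) (γ : Finset (Fin d) → ℝ) (z : Fin d → ℤ) :
    dualSum d p β γ z = ∑' h, if (p : ℤ) ∣ ∑ j, h j * z j then rKorInv d β γ h else 0 := by
  rw [dualSum, _root_.tsum_subtype]
  refine tsum_congr fun h => ?_
  by_cases hh : h = 0
  · simp [hh, rKorInv]
  · simp [Set.indicator_apply, dualLat, hh]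

lemma sum_dualSum_eq_tsum (β : ℝ) (γ : Finset (Fin d) → ℝ) :
    ∑ z ∈ genSet d p, dualSum d p β γ z = ∑' h : Fin d → ℤ,
      (#((genSet d p).filter fun z => (p : ℤ) ∣ ∑ j, h j * z j) : ℝ≥0∞) * rKorInv d β γ h := by
  simp_rw [dualSum_eq_tsum_ite]
  rw [← Summable.tsum_finsetSum fun _ _ => ENNReal.summable]
  refine tsum_congr fun h => ?_
  rw [sum_ite, sum_const, sum_const_zero, add_zero, nsmul_eq_mul]

lemma tsum_ite_dvd_rKorInv_le {β : ℝ} (hβ : 0 ≤ β) (γ : Finset (Fin d) → ℝ)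
    (hγ : ∀ u : Finset (Fin d), u.Nonempty → 0 ≤ γ u) (hp : 1 ≤ p) :
    ∑' h : Fin d → ℤ, (if ∀ j, (p : ℤ) ∣ h j then rKorInv d β γ h else 0) ≤
      ENNReal.ofReal ((p : ℝ) ^ (-β)) * ∑' h, rKorInv d β γ h := by
  have hinj : Function.Injective fun m : Fin d → ℤ => (p : ℤ) • m :=
    smul_right_injective _ (by exact_mod_cast (by omega : p ≠ 0))
  rw [← hinj.tsum_eq, ← ENNReal.tsum_mul_left]
  · refine ENNReal.tsum_le_tsum fun m => ?_
    rw [if_pos fun j => ⟨m j, rfl⟩]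
    exact rKorInv_smul_le hβ γ hγ hp m
  · refine Function.support_subset_iff'.mpr fun h hh => if_neg fun hdvd => hh ?_
    exact ⟨fun j => h j / p, funext fun j => Int.mul_ediv_cancel' (hdvd j)⟩

lemma sub_one_mul_sum_dualSum_le (hp : p.Prime) {β : ℝ} (hβ : 1 < β) (γ : Finset (Fin d) → ℝ)
    (hγ : ∀ u : Finset (Fin d), u.Nonempty → 0 ≤ γ u) :
    ((p - 1 : ℕ) : ℝ≥0∞) * ∑ z ∈ genSet d p, dualSum d p β γ z ≤
      2 * (((p - 1) ^ d : ℕ) : ℝ≥0∞) * ENNReal.ofReal (Vd d β γ) := by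
  set N : ℝ≥0∞ := (((p - 1) ^ d : ℕ) : ℝ≥0∞)
  set q : ℝ≥0∞ := ((p - 1 : ℕ) : ℝ≥0∞)
  have hcount : ∀ h : Fin d → ℤ,
      q * ((#((genSet d p).filter fun z => (p : ℤ) ∣ ∑ j, h j * z j) : ℝ≥0∞) * rKorInv d β γ h) ≤
        N * rKorInv d β γ h + q * N * (if ∀ j, (p : ℤ) ∣ h j then rKorInv d β γ h else 0) := by
    intro h
    split_ifs with hdvd
    · refine le_add_left ?_
      rw [mul_assoc]
      gcongr
      simp only [N]
      exact_mod_cast (card_filter_le _ _).trans (card_genSet d p).le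
    · push Not at hdvd
      obtain ⟨j₀, hj₀⟩ := hdvd
      rw [mul_zero, add_zero, ← mul_assoc]
      gcongr
      simp only [N, q]
      rw [← mul_pow_sub_one (Fin.pos_iff_nonempty.mpr ⟨j₀⟩).ne']
      exact_mod_cast Nat.mul_le_mul_left _ (card_filter_dvd_le hp hj₀)
  have hq : q * ENNReal.ofReal ((p : ℝ) ^ (-β)) ≤ 1 := by
    simp only [q]
    rw [← ENNReal.ofReal_natCast, Nat.cast_sub hp.one_le, Nat.cast_one,
      ← ENNReal.ofReal_mul (by linarith [(Nat.one_le_cast (α := ℝ)).mpr hp.one_le])]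
    exact ENNReal.ofReal_le_one.mpr
      (sub_one_mul_rpow_neg_le_one (by exact_mod_cast hp.one_le) hβ.le)
  calc q * ∑ z ∈ genSet d p, dualSum d p β γ z
      ≤ N * ∑' h, rKorInv d β γ h + q * N *
          ∑' h : Fin d → ℤ, (if ∀ j, (p : ℤ) ∣ h j then rKorInv d β γ h else 0) := by
        rw [sum_dualSum_eq_tsum, ← ENNReal.tsum_mul_left, ← ENNReal.tsum_mul_left,
          ← ENNReal.tsum_mul_left, ← ENNReal.tsum_add]
        exact ENNReal.tsum_le_tsum hcount
    _ ≤ N * ∑' h, rKorInv d β γ h +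
          q * N * (ENNReal.ofReal ((p : ℝ) ^ (-β)) * ∑' h, rKorInv d β γ h) := by
        grw [tsum_ite_dvd_rKorInv_le (by linarith) γ hγ hp.one_le]
    _ = N * ∑' h, rKorInv d β γ h + (q * ENNReal.ofReal ((p : ℝ) ^ (-β))) * N *
          ∑' h, rKorInv d β γ h := by ring
    _ ≤ 2 * N * ENNReal.ofReal (Vd d β γ) := by
        grw [hq, tsum_rKorInv hβ γ hγ]
        exact le_of_eq (by ring)

end LatticeAverage

section ErrorBound

variable {d : ℕ} {α : ℝ} {γ : Finset (Fin d) → ℝ}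

lemma rKor_pos (hγ : ∀ u : Finset (Fin d), u.Nonempty → 0 < γ u) (h : Fin d → ℤ) :
    0 < rKor d α γ h := by
  by_cases hh : h = 0
  · simp [rKor, hh]
  · rw [rKor, if_neg hh]
    exact mul_pos (inv_pos.mpr (hγ _ (suppF_nonempty hh)))
      (prod_pos fun j hj =>
        Real.rpow_pos_of_pos (abs_pos.mpr (by exact_mod_cast mem_suppF.mp hj)) _)

lemma rKor_div_eq_rpow (hγ : ∀ u : Finset (Fin d), u.Nonempty → 0 ≤ γ u) (l : ℝ)
    (h : Fin d → ℤ) : rKor d (α / l) (fun u => γ u ^ (1 / l)) h = rKor d α γ h ^ (1 / l) := by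
  by_cases hh : h = 0
  · simp [rKor, hh]
  have hu := hγ _ (suppF_nonempty hh)
  rw [rKor, if_neg hh, rKor, if_neg hh, Real.mul_rpow (inv_nonneg.mpr hu)
    (prod_nonneg fun _ _ => by positivity), Real.inv_rpow hu,
    ← Real.finsetProd_rpow _ _ fun _ _ => by positivity]
  congr 1
  refine prod_congr rfl fun j _ => ?_
  rw [← Real.rpow_mul (abs_nonneg _), mul_one_div]

lemma Edet_le_rpow_of_dualSum_le (hγ : ∀ u : Finset (Fin d), u.Nonempty → 0 < γ u) {p : ℕ}
    {l T : ℝ} (hl : 1 / 2 ≤ l) (hT : 0 ≤ T) {z : Fin d → ℤ}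
    (hz : dualSum d p (α / l) (fun u => γ u ^ (1 / l)) z ≤ ENNReal.ofReal T) :
    Edet d α γ p z ≤ T ^ l := by
  have hl0 : 0 < l := by linarith
  have hterm : ∀ h : dualLat d p z, ENNReal.ofReal ((rKor d α γ h ^ 2)⁻¹) =
      rKorInv d (α / l) (fun u => γ u ^ (1 / l)) h ^ (2 * l) := by
    intro h
    have hr := rKor_pos (α := α) hγ h
    rw [rKorInv, if_neg h.2.1, rKor_div_eq_rpow (fun u hu => (hγ u hu).le),
      ENNReal.ofReal_rpow_of_nonneg (by positivity) (by linarith), Real.inv_rpow (by positivity),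
      ← Real.rpow_mul hr.le, one_div_mul_eq_div, mul_div_cancel_right₀ _ hl0.ne', Real.rpow_two]
  have hsq : ∑' h : dualLat d p z, (rKor d α γ h ^ 2)⁻¹ ≤ T ^ (2 * l) := by
    have hE : ∑' h : dualLat d p z, ENNReal.ofReal ((rKor d α γ h ^ 2)⁻¹) ≤
        ENNReal.ofReal (T ^ (2 * l)) := by
      rw [tsum_congr hterm, ← ENNReal.ofReal_rpow_of_nonneg hT (by linarith)]
      exact (ENNReal.tsum_rpow_le_rpow_tsum _ (by linarith)).trans
        (ENNReal.rpow_le_rpow hz (by linarith))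
    calc ∑' h : dualLat d p z, (rKor d α γ h ^ 2)⁻¹
        = (∑' h : dualLat d p z, ENNReal.ofReal ((rKor d α γ h ^ 2)⁻¹)).toReal := by
          rw [ENNReal.tsum_toReal_eq fun _ => ENNReal.ofReal_ne_top]
          simp only [ENNReal.toReal_ofReal (inv_nonneg.mpr (sq_nonneg _))]
      _ ≤ T ^ (2 * l) := ENNReal.toReal_le_of_le_ofReal (by positivity) hE
  calc Edet d α γ p z ≤ Real.sqrt (T ^ (2 * l)) := Real.sqrt_le_sqrt hsq
    _ = T ^ l := by
      rw [Real.sqrt_eq_rpow, ← Real.rpow_mul hT]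
      ring_nf

end ErrorBound

lemma Vd_nonneg {d : ℕ} (β : ℝ) {γ : Finset (Fin d) → ℝ}
    (hγ : ∀ u : Finset (Fin d), u.Nonempty → 0 ≤ γ u) : 0 ≤ Vd d β γ :=
  sum_nonneg fun u hu => mul_nonneg (hγ u (mem_filter.mp hu).2)
    (pow_nonneg (mul_nonneg zero_le_two (zetaR_nonneg _)) _)

lemma sum_dualSum_le {d p : ℕ} (hp : p.Prime) {τ β : ℝ} (hτ : τ < 1) (hβ : 1 < β)
    {γ : Finset (Fin d) → ℝ} (hγ : ∀ u : Finset (Fin d), u.Nonempty → 0 ≤ γ u) :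
    ∑ z ∈ genSet d p, dualSum d p β γ z ≤ ENNReal.ofReal ((1 - τ) * ((p : ℝ) - 1) ^ d) *
      ENNReal.ofReal (2 / ((1 - τ) * ((p : ℝ) - 1)) * Vd d β γ) := by
  have hp1 : (0 : ℝ) < p - 1 := by
    have : (2 : ℝ) ≤ p := by exact_mod_cast hp.two_le
    linarith
  have hτ' : (0 : ℝ) < 1 - τ := by linarith
  have h := sub_one_mul_sum_dualSum_le hp hβ γ hγ
  rw [← ENNReal.ofReal_natCast, ← ENNReal.ofReal_natCast, Nat.cast_pow, Nat.cast_sub hp.one_le,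
    Nat.cast_one] at h
  refine (ENNReal.mul_le_mul_iff_right (ENNReal.ofReal_pos.mpr hp1).ne' ENNReal.ofReal_ne_top).mp
    (h.trans_eq ?_)
  rw [← ENNReal.ofReal_ofNat 2, ← ENNReal.ofReal_mul zero_le_two,
    ← ENNReal.ofReal_mul (by positivity), ← ENNReal.ofReal_mul (by positivity),
    ← ENNReal.ofReal_mul hp1.le]
  congr 1
  field_simp

lemma le_card_filter_Edet_le {d p : ℕ} (hp : p.Prime) {τ α l : ℝ} (hτ : τ < 1) (hl : 1 / 2 ≤ l)
    (hlα : l < α) {γ : Finset (Fin d) → ℝ} (hγ : ∀ u : Finset (Fin d), u.Nonempty → 0 < γ u) :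
    τ * ((p : ℝ) - 1) ^ d ≤ #((genSet d p).filter fun z => Edet d α γ p z ≤
      (2 / ((1 - τ) * ((p : ℝ) - 1)) * Vd d (α / l) (fun u => γ u ^ (1 / l))) ^ l) := by
  set γ' : Finset (Fin d) → ℝ := fun u => γ u ^ (1 / l)
  have hγ' : ∀ u : Finset (Fin d), u.Nonempty → 0 ≤ γ' u := fun u hu => by
    have := (hγ u hu).le
    positivity
  have hβ : 1 < α / l := (one_lt_div (by linarith)).mpr hlα
  have hp1 : (1 : ℝ) ≤ p := by exact_mod_cast hp.one_le
  set T := 2 / ((1 - τ) * ((p : ℝ) - 1)) * Vd d (α / l) γ'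
  have hT : 0 ≤ T :=
    mul_nonneg (div_nonneg zero_le_two (mul_nonneg (by linarith) (by linarith))) (Vd_nonneg _ hγ')
  set bad := (genSet d p).filter fun z => ENNReal.ofReal T < dualSum d p (α / l) γ' z
  have hbad : (#bad : ℝ) ≤ (1 - τ) * ((p : ℝ) - 1) ^ d := by
    have := card_filter_lt_le_of_sum_le _ _ (sum_dualSum_le hp hτ hβ hγ')
    rwa [← ENNReal.ofReal_natCast, ENNReal.ofReal_le_ofReal_iff
      (mul_nonneg (by linarith) (pow_nonneg (by linarith) _))] at this
  have hgood : (genSet d p).filter (fun z => ¬ENNReal.ofReal T < dualSum d p (α / l) γ' z) ⊆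
      (genSet d p).filter fun z => Edet d α γ p z ≤ T ^ l :=
    monotone_filter_right _ fun z _ hz => Edet_le_rpow_of_dualSum_le hγ hl hT (not_lt.mp hz)
  have hcard := card_filter_add_card_filter_not (s := genSet d p)
    (fun z => ENNReal.ofReal T < dualSum d p (α / l) γ' z)
  rw [card_genSet] at hcard
  calc τ * ((p : ℝ) - 1) ^ d ≤ (((p - 1) ^ d : ℕ) : ℝ) - #bad := by
        rw [Nat.cast_pow, Nat.cast_sub hp.one_le, Nat.cast_one]
        linarith
    _ ≤ #((genSet d p).filter fun z => Edet d α γ p z ≤ T ^ l) := by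
        rw [← hcard, Nat.cast_add, add_sub_cancel_left]
        exact_mod_cast card_le_card hgood

/-- there is a large set of good generating vectors. -/
theorem stmt_0 (p d : ℕ) (hp : p.Prime) (τ α : ℝ) (hτ : τ ∈ Set.Ioo (0 : ℝ) 1)
    (hα : 1 / 2 < α) (γ : Finset (Fin d) → ℝ)
    (hγ : ∀ u : Finset (Fin d), u.Nonempty → 0 < γ u ∧ γ u ≤ 1) :
    ∃ Z : Finset (Fin d → ℤ), Z ⊆ genSet d p ∧
      ⌈τ * ((p : ℝ) - 1) ^ d⌉₊ ≤ Z.card ∧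
      ∀ z ∈ Z, Edet d α γ p z ≤
        ⨅ lam : Set.Ico (1 / 2 : ℝ) α,
          (2 / ((1 - τ) * ((p : ℝ) - 1)) *
            Vd d (α / (lam : ℝ)) (fun u => γ u ^ (1 / (lam : ℝ)))) ^ (lam : ℝ) := by
  have hm : ⌈τ * ((p : ℝ) - 1) ^ d⌉₊ ≤ #(genSet d p) := by
    rw [card_genSet, Nat.ceil_le, Nat.cast_pow, Nat.cast_sub hp.one_le, Nat.cast_one]
    have hp1 : (1 : ℝ) ≤ p := by exact_mod_cast hp.one_le
    exact mul_le_of_le_one_left (pow_nonneg (by linarith) _) hτ.2.le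
  obtain ⟨Z, hZs, hZcard, hZlow⟩ := exists_subset_card_eq_forall_le (genSet d p) (Edet d α γ p) hm
  have : Nonempty (Set.Ico (1 / 2 : ℝ) α) := ⟨⟨1 / 2, le_rfl, hα⟩⟩
  refine ⟨Z, hZs, hZcard.ge, fun z hz => le_ciInf fun ⟨l, hl, hlα⟩ => ?_⟩
  refine le_of_card_le_card_filter_le hZlow ?_ hz
  rw [hZcard, Nat.ceil_le]
  exact le_card_filter_Edet_le hp hτ.2 hl hlα fun u hu => (hγ u hu).1

end
end

section
/- Let N be an odd natural number, let X_1,…,X_N be independent real-valued random variables, let I ⊆ ℝ be an interval, and let τ < 1/2 be such that P(X_i ∉ I) ≤ τ for every i. Then P(median{X_1,…,X_N} ∉ I) ≤ (1/2)·(4τ(1−τ))^{N/2}. -/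
open scoped BigOperators Classical

noncomputable section

/-!
If the median of `X₁, …, X_N` lies outside the interval `I`, then at least `(N + 1) / 2` of the
`X_i` do, for otherwise `I` would contain a value below and a value above the median. By
independence, the probability of that is the upper tail of the Poisson binomial distribution
with parameters `q_i = P(X_i ∉ I) ≤ τ`. This tail is affine in each `q_i` with nonnegative slope,
so it is at most the binomial tail `∑_{2|S| > N} τ^|S| (1 - τ)^(N - |S|)`; since `τ ≤ 1 - τ`,
each of its `2^(N-1)` terms is at most `(τ (1 - τ))^(N/2)`.
-/

open Finset MeasureTheory ProbabilityTheory MeasurableSpace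

theorem le_countP_notMem_of_pairwise_le {t : ℕ} {I : Set ℝ} (hI : I.OrdConnected) {l : List ℝ}
    (hl : l.Pairwise (· ≤ ·)) (hlen : l.length = 2 * t + 1) (hm : l[t]'(by omega) ∉ I) :
    t + 1 ≤ l.countP (· ∉ I) := by
  set m := l[t]'(by omega)
  have hle : t + 1 ≤ l.countP (· ≤ m) :=
    calc t + 1 = (l.take (t + 1)).countP (· ≤ m) := by
          refine (List.countP_eq_length.2 fun a ha => ?_).trans (by simp; omega) |>.symm
          obtain ⟨j, hj, rfl⟩ := List.getElem_of_mem ha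
          simp only [List.getElem_take, decide_eq_true_eq]
          exact hl.rel_get_of_le (a := ⟨j, by simp at hj; omega⟩) (b := ⟨t, _⟩)
            (by simp at hj ⊢; omega)
      _ ≤ l.countP (· ≤ m) := (List.take_sublist _ _).countP_le
  have hge : t + 1 ≤ l.countP (m ≤ ·) :=
    calc t + 1 = (l.drop t).countP (m ≤ ·) := by
          refine (List.countP_eq_length.2 fun a ha => ?_).trans (by simp; omega) |>.symm
          obtain ⟨j, hj, rfl⟩ := List.getElem_of_mem ha
          simp only [List.getElem_drop, decide_eq_true_eq]
          exact hl.rel_get_of_le (a := ⟨t, _⟩) (b := ⟨t + j, by simp at hj; omega⟩) (by simp)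
      _ ≤ l.countP (m ≤ ·) := (List.drop_sublist _ _).countP_le
  have hsplit := l.length_eq_countP_add_countP (· ∉ I)
  -- `I` cannot meet both `Iic m` and `Ici m`, as it would then contain `m`.
  by_cases hbelow : ∃ a ∈ I, a ≤ m
  · obtain ⟨a, haI, ham⟩ := hbelow
    have : l.countP (fun x => ¬ decide (x ∉ I)) ≤ l.countP (fun x => ¬ decide (m ≤ x)) :=
      List.countP_mono_left fun b _ hb => by
        simp only [decide_not, Bool.not_eq_eq_eq_not, Bool.not_true, decide_eq_false_iff_not,
          Decidable.not_not, decide_eq_true_eq] at hb ⊢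
        exact fun hmb => hm (hI.out haI hb ⟨ham, hmb⟩)
    have := l.length_eq_countP_add_countP (m ≤ ·)
    omega
  · have : l.countP (fun x => ¬ decide (x ∉ I)) ≤ l.countP (fun x => ¬ decide (x ≤ m)) :=
      List.countP_mono_left fun b _ hb => by
        simp only [decide_not, Bool.not_eq_eq_eq_not, Bool.not_true, decide_eq_false_iff_not,
          Decidable.not_not, decide_eq_true_eq] at hb ⊢
        exact fun hbm => hbelow ⟨b, hb, hbm⟩
    have := l.length_eq_countP_add_countP (· ≤ m)
    omega

theorem List.countP_ofFn {α : Type*} {N : ℕ} (f : Fin N → α) (p : α → Prop) [DecidablePred p] :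
    (List.ofFn f).countP p = #{i | p (f i)} := by
  rw [← Multiset.coe_countP, ← Fin.univ_val_map, Multiset.countP_map]
  rfl

theorem le_card_filter_notMem_of_medianR_notMem {N : ℕ} (hN : Odd N) {I : Set ℝ}
    (hI : I.OrdConnected) {f : Fin N → ℝ} (h : medianR f ∉ I) :
    (N + 1) / 2 ≤ #{i | f i ∉ I} := by
  obtain ⟨t, rfl⟩ := hN
  set l := (List.ofFn f).insertionSort (· ≤ ·)
  have hperm : l.Perm (List.ofFn f) := List.perm_insertionSort _ _
  have hlen : l.length = 2 * t + 1 := by simp [hperm.length_eq]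
  have hmed : medianR f = l[t] := by
    change l.getD _ 0 = _
    rw [List.getD_eq_getElem _ _ (by omega)]
    simp
  rw [show (2 * t + 1 + 1) / 2 = t + 1 by omega, ← List.countP_ofFn f (· ∉ I), ← hperm.countP_eq]
  exact le_countP_notMem_of_pairwise_le hI (List.pairwise_insertionSort _ _) hlen (hmed ▸ h)

section PoissonBinomial

variable {ι : Type*} [DecidableEq ι] {s S : Finset ι} {q q' : ι → ℝ}

def poissonBinomialTail (s : Finset ι) (k : ℕ) (q : ι → ℝ) : ℝ :=
  ∑ S ∈ s.powerset with k ≤ #S, (∏ i ∈ S, q i) * ∏ i ∈ s \ S, (1 - q i)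

theorem prod_mul_prod_sdiff_one_sub_nonneg (hq : ∀ i ∈ s, q i ∈ Set.Icc 0 1) (hS : S ⊆ s) :
    0 ≤ (∏ i ∈ S, q i) * ∏ i ∈ s \ S, (1 - q i) :=
  mul_nonneg (prod_nonneg fun i hi => (hq i (hS hi)).1)
    (prod_nonneg fun i hi => sub_nonneg.2 (hq i (sdiff_subset hi)).2)

theorem poissonBinomialTail_anti (hq : ∀ i ∈ s, q i ∈ Set.Icc 0 1) {k k' : ℕ} (hk : k ≤ k') :
    poissonBinomialTail s k' q ≤ poissonBinomialTail s k q :=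
  sum_le_sum_of_subset_of_nonneg (monotone_filter_right _ fun _ _ h => hk.trans h)
    fun _ hS _ => prod_mul_prod_sdiff_one_sub_nonneg hq (mem_powerset.1 (mem_filter.1 hS).1)

theorem poissonBinomialTail_zero {k : ℕ} (hk : 0 < k) :
    poissonBinomialTail s k (fun _ => 0) = 0 := by
  refine sum_eq_zero fun S hS => ?_
  obtain ⟨i, hi⟩ := card_pos.1 (hk.trans_le (mem_filter.1 hS).2)
  rw [prod_eq_zero hi rfl, zero_mul]

theorem poissonBinomialTail_insert {a : ι} (ha : a ∉ s) (k : ℕ) (q : ι → ℝ) :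
    poissonBinomialTail (insert a s) k q =
      q a * poissonBinomialTail s (k - 1) q + (1 - q a) * poissonBinomialTail s k q := by
  simp only [poissonBinomialTail, sum_filter, sum_powerset_insert ha, mul_sum]
  rw [add_comm]
  congr 1 <;> refine sum_congr rfl fun T hT => ?_
  · have haT : a ∉ T := fun h => ha (mem_powerset.1 hT h)
    rw [insert_sdiff_insert, sdiff_insert_of_notMem ha, card_insert_of_notMem haT,
      prod_insert haT]
    simp only [show k ≤ #T + 1 ↔ k - 1 ≤ #T by omega]
    split_ifs <;> ring
  · have haT : a ∉ T := fun h => ha (mem_powerset.1 hT h)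
    rw [insert_sdiff_of_notMem _ haT, prod_insert (fun h => ha (mem_sdiff.1 h).1)]
    split_ifs <;> ring

theorem poissonBinomialTail_mono (hq : ∀ i ∈ s, 0 ≤ q i) (hqq' : ∀ i ∈ s, q i ≤ q' i)
    (hq' : ∀ i ∈ s, q' i ≤ 1) (k : ℕ) :
    poissonBinomialTail s k q ≤ poissonBinomialTail s k q' := by
  induction s using Finset.induction_on generalizing k with
  | empty => simp only [poissonBinomialTail, powerset_empty, filter_singleton]; split_ifs <;> simp
  | insert a s ha ih =>
    simp only [mem_insert, forall_eq_or_imp] at hq hqq' hq'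
    have hq's : ∀ i ∈ s, q' i ∈ Set.Icc 0 1 := fun i hi =>
      ⟨(hq.2 i hi).trans (hqq'.2 i hi), hq'.2 i hi⟩
    have hanti := poissonBinomialTail_anti hq's (Nat.sub_le k 1)
    rw [poissonBinomialTail_insert ha, poissonBinomialTail_insert ha]
    calc q a * poissonBinomialTail s (k - 1) q + (1 - q a) * poissonBinomialTail s k q
        ≤ q a * poissonBinomialTail s (k - 1) q' + (1 - q a) * poissonBinomialTail s k q' := by
          have ih := ih hq.2 hqq'.2 hq'.2
          gcongr
          · exact hq.1
          · exact ih _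
          · linarith [hqq'.1, hq'.1]
          · exact ih _
      _ ≤ q' a * poissonBinomialTail s (k - 1) q' + (1 - q' a) * poissonBinomialTail s k q' := by
          linarith [mul_nonneg (sub_nonneg.2 hqq'.1) (sub_nonneg.2 hanti)]

end PoissonBinomial

theorem card_filter_succ_div_two_le_card_eq {α : Type*} [Fintype α] (hα : Odd (Fintype.card α)) :
    #{S : Finset α | (Fintype.card α + 1) / 2 ≤ #S} = 2 ^ (Fintype.card α - 1) := by
  obtain ⟨t, ht⟩ := hα
  have hcompl : #{S : Finset α | (Fintype.card α + 1) / 2 ≤ #S} =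
      #{S : Finset α | ¬ (Fintype.card α + 1) / 2 ≤ #S} := by
    refine card_nbij' compl compl (fun S hS => ?_) (fun S hS => ?_) (fun S _ => compl_compl S)
      (fun S _ => compl_compl S) <;>
    · simp only [coe_filter, mem_univ, true_and, Set.mem_ofPred_eq, card_compl] at hS ⊢
      have := card_le_univ S
      omega
  have htotal := card_filter_add_card_filter_not
    (s := (univ : Finset (Finset α))) (p := fun S => (Fintype.card α + 1) / 2 ≤ #S)
  rw [card_univ, Fintype.card_finset, ← hcompl] at htotal
  rw [ht, pow_succ] at htotal
  rw [ht, Nat.add_sub_cancel]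
  omega

theorem pow_mul_pow_sub_le_mul_rpow_half {a b : ℝ} (ha : 0 ≤ a) (hab : a ≤ b) {j n : ℕ}
    (hj : n ≤ 2 * j) (hjn : j ≤ n) :
    a ^ j * b ^ (n - j) ≤ (a * b) ^ ((n : ℝ) / 2) := by
  have hb : 0 ≤ b := ha.trans hab
  refine (pow_le_pow_iff_left₀ (by positivity) (by positivity) two_ne_zero).1 ?_
  rw [← Real.rpow_mul_natCast (by positivity), Nat.cast_ofNat, div_mul_cancel₀ _ two_ne_zero,
    Real.rpow_natCast]
  obtain ⟨m, rfl⟩ := Nat.exists_eq_add_of_le hjn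
  obtain ⟨d, rfl⟩ := Nat.exists_eq_add_of_le (show m ≤ j by omega)
  rw [Nat.add_sub_cancel_left]
  calc (a ^ (m + d) * b ^ m) ^ 2 = (a * b) ^ (2 * m) * a ^ d * a ^ d := by ring
    _ ≤ (a * b) ^ (2 * m) * a ^ d * b ^ d := by gcongr
    _ = (a * b) ^ (m + d + m) := by ring

theorem poissonBinomialTail_const_le {α : Type*} [Fintype α] [DecidableEq α]
    (hα : Odd (Fintype.card α)) {τ : ℝ} (hτ0 : 0 ≤ τ) (hτ : τ ≤ 1 / 2) :
    poissonBinomialTail univ ((Fintype.card α + 1) / 2) (fun _ : α => τ) ≤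
      1 / 2 * (4 * τ * (1 - τ)) ^ ((Fintype.card α : ℝ) / 2) := by
  set n := Fintype.card α
  have h4 : (4 : ℝ) ^ ((n : ℝ) / 2) = 2 * 2 ^ (n - 1) := by
    rw [show (4 : ℝ) = 2 ^ (2 : ℝ) by norm_num, ← Real.rpow_mul zero_le_two,
      mul_div_cancel₀ _ two_ne_zero, Real.rpow_natCast, ← pow_succ', Nat.sub_add_cancel hα.pos]
  calc poissonBinomialTail univ ((n + 1) / 2) (fun _ : α => τ)
      = ∑ S ∈ univ.powerset with (n + 1) / 2 ≤ #S, τ ^ #S * (1 - τ) ^ (n - #S) := by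
        refine sum_congr rfl fun S _ => ?_
        rw [prod_const, prod_const, card_univ_sdiff]
    _ ≤ ∑ S ∈ univ.powerset with (n + 1) / 2 ≤ #S, (τ * (1 - τ)) ^ ((n : ℝ) / 2) :=
        sum_le_sum fun S hS => pow_mul_pow_sub_le_mul_rpow_half hτ0 (by linarith)
          (by have := (mem_filter.1 hS).2; omega) (card_le_univ S)
    _ = 1 / 2 * (4 * τ * (1 - τ)) ^ ((n : ℝ) / 2) := by
        rw [sum_const, powerset_univ, card_filter_succ_div_two_le_card_eq hα, nsmul_eq_mul,
          mul_assoc (4 : ℝ), Real.mul_rpow (x := 4) (by norm_num) (by nlinarith), h4]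
        push_cast
        ring

section Independence

variable {Ω ι : Type*} [MeasurableSpace Ω] {μ : Measure Ω}

theorem ProbabilityTheory.iIndepFun.iIndepSet_preimage {β : Type*} [MeasurableSpace β]
    {X : ι → Ω → β} (h : iIndepFun X μ) {T : Set β} (hT : MeasurableSet T) :
    iIndepSet (fun i => X i ⁻¹' T) μ :=
  (iIndepSet_iff_iIndep _ _).2 <| iIndep_of_iIndep_of_le h.iIndep fun _ =>
    MeasurableSpace.generateFrom_le fun _ hs => hs ▸ ⟨T, hT, rfl⟩

variable [Fintype ι] [DecidableEq ι] {A : ι → Set Ω}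

theorem ProbabilityTheory.iIndepSet.measureReal_iInter_ite (h : iIndepSet A μ)
    (hA : ∀ i, MeasurableSet (A i)) (S : Finset ι) :
    μ.real (⋂ i, if i ∈ S then A i else (A i)ᶜ) =
      (∏ i ∈ S, μ.real (A i)) * ∏ i ∈ univ \ S, (1 - μ.real (A i)) := by
  have := h.isProbabilityMeasure
  have hmeas (i : ι) :
      MeasurableSet[generateFrom {A i}] (if i ∈ S then A i else (A i)ᶜ) := by
    have : MeasurableSet[generateFrom {A i}] (A i) := measurableSet_generateFrom rfl
    split_ifs
    exacts [this, this.compl]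
  rw [measureReal_def, ((iIndepSet_iff_iIndep _ _).1 h).meas_iInter hmeas, ENNReal.toReal_prod,
    ← prod_mul_prod_compl S]
  simp only [← measureReal_def, apply_ite, probReal_compl_eq_one_sub (hA _)]
  rw [compl_eq_univ_sdiff]
  congr 1 <;> refine prod_congr rfl fun i hi => ?_
  · rw [if_pos hi]
  · rw [if_neg (mem_sdiff.1 hi).2]

theorem ProbabilityTheory.iIndepSet.measure_le_card_le_poissonBinomialTail (h : iIndepSet A μ)
    (hA : ∀ i, MeasurableSet (A i)) (k : ℕ) :
    μ {ω | k ≤ #{i | ω ∈ A i}} ≤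
      ENNReal.ofReal (poissonBinomialTail univ k fun i => μ.real (A i)) := by
  have := h.isProbabilityMeasure
  set E : Finset ι → Set Ω := fun S => ⋂ i, if i ∈ S then A i else (A i)ᶜ
  have hsub : {ω | k ≤ #{i | ω ∈ A i}} ⊆ ⋃ S ∈ (univ : Finset ι).powerset.filter (k ≤ #·), E S := by
    intro ω hω
    refine Set.mem_iUnion₂.2 ⟨({i | ω ∈ A i} : Finset ι), by simpa using hω, ?_⟩
    refine Set.mem_iInter.2 fun i => ?_
    split_ifs with hi <;> simpa using hi
  calc μ {ω | k ≤ #{i | ω ∈ A i}}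
      ≤ μ (⋃ S ∈ (univ : Finset ι).powerset.filter (k ≤ #·), E S) := measure_mono hsub
    _ ≤ ∑ S ∈ (univ : Finset ι).powerset.filter (k ≤ #·), μ (E S) := measure_biUnion_finset_le _ _
    _ = ENNReal.ofReal (poissonBinomialTail univ k fun i => μ.real (A i)) := by
        rw [poissonBinomialTail, ENNReal.ofReal_sum_of_nonneg fun S hS =>
          prod_mul_prod_sdiff_one_sub_nonneg (fun i _ => ⟨measureReal_nonneg, measureReal_le_one⟩)
            (mem_powerset.1 (mem_filter.1 hS).1)]
        refine sum_congr rfl fun S _ => ?_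
        rw [← h.measureReal_iInter_ite hA, ofReal_measureReal]

end Independence

theorem stmt_1_general {Ω : Type*} [MeasurableSpace Ω] (μ : MeasureTheory.Measure Ω)
    (N : ℕ) (hN : Odd N)
    (X : Fin N → Ω → ℝ) (hXm : ∀ i, Measurable (X i))
    (hind : ProbabilityTheory.iIndepFun X μ)
    (I : Set ℝ) (hI : I.OrdConnected) (τ : ℝ) (hτ : τ < 1 / 2)
    (hb : ∀ i, μ {ω | X i ω ∉ I} ≤ ENNReal.ofReal τ) :
    μ {ω | medianR (fun i => X i ω) ∉ I} ≤
      ENNReal.ofReal ((1 / 2) * (4 * τ * (1 - τ)) ^ ((N : ℝ) / 2)) := by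
  set A : Fin N → Set Ω := fun i => X i ⁻¹' Iᶜ
  have hA : ∀ i, MeasurableSet (A i) := fun i => hXm i hI.measurableSet.compl
  have htail : poissonBinomialTail univ ((N + 1) / 2) (fun i => μ.real (A i)) ≤
      poissonBinomialTail univ ((N + 1) / 2) (fun _ => max τ 0) :=
    poissonBinomialTail_mono (fun _ _ => measureReal_nonneg)
      (fun i _ => ENNReal.toReal_le_of_le_ofReal (le_max_right _ _)
        ((hb i).trans (ENNReal.ofReal_le_ofReal (le_max_left _ _))))
      (fun _ _ => max_le (by linarith) zero_le_one) _
  calc μ {ω | medianR (fun i => X i ω) ∉ I}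
      ≤ μ {ω | (N + 1) / 2 ≤ #{i | ω ∈ A i}} :=
        measure_mono fun ω hω => by simpa [A] using le_card_filter_notMem_of_medianR_notMem hN hI hω
    _ ≤ ENNReal.ofReal (poissonBinomialTail univ ((N + 1) / 2) fun i => μ.real (A i)) :=
        (hind.iIndepSet_preimage hI.measurableSet.compl).measure_le_card_le_poissonBinomialTail hA _
    _ ≤ ENNReal.ofReal ((1 / 2) * (4 * τ * (1 - τ)) ^ ((N : ℝ) / 2)) := by
      rcases le_or_gt τ 0 with hτ0 | hτ0
      · rw [max_eq_right hτ0, poissonBinomialTail_zero (by have := hN.pos; omega)] at htail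
        rw [ENNReal.ofReal_of_nonpos htail]
        exact zero_le
      · rw [max_eq_left hτ0.le] at htail
        refine ENNReal.ofReal_le_ofReal (htail.trans ?_)
        simpa using poissonBinomialTail_const_le (α := Fin N) (by simpa using hN) hτ0.le hτ.le

/-- the median trick for real random variables. -/
theorem stmt_1 {Ω : Type*} [MeasurableSpace Ω] (μ : MeasureTheory.Measure Ω)
    [MeasureTheory.IsProbabilityMeasure μ] (N : ℕ) (hN : Odd N)
    (X : Fin N → Ω → ℝ) (hXm : ∀ i, Measurable (X i))
    (hind : ProbabilityTheory.iIndepFun X μ)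
    (I : Set ℝ) (hI : I.OrdConnected) (τ : ℝ) (hτ : τ < 1 / 2)
    (hb : ∀ i, μ {ω | X i ω ∉ I} ≤ ENNReal.ofReal τ) :
    μ {ω | medianR (fun i => X i ω) ∉ I} ≤
      ENNReal.ofReal ((1 / 2) * (4 * τ * (1 - τ)) ^ ((N : ℝ) / 2)) :=
  stmt_1_general μ N hN X hXm hind I hI τ hτ hb

end
end

section
/- Let d ∈ ℕ, α > 1/2, let γ = (γ_u) be weights with 0 < γ_u ≤ 1, and let λ ∈ [1/2, α). Then ( Σ_{∅≠u⊆{1,…,d}} γ_u² (2ζ(2α))^{|u|} )^{1/2} ≤ ( Σ_{∅≠u⊆{1,…,d}} γ_u^{1/λ} (2ζ(α/λ))^{|u|} )^{λ} = V_d(α/λ, γ^{1/λ})^{λ}. -/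
open scoped BigOperators Classical

noncomputable section

/- Each term satisfies `γ_u² (2ζ(2α))^{|u|} ≤ (γ_u^{1/λ} (2ζ(α/λ))^{|u|})^{2λ}`, because
`ζ(2α) ≤ ζ(α/λ)` (as `α/λ ≤ 2α`) and `2ζ(α/λ) ≥ 1`. Since `2λ ≥ 1`, a sum of `2λ`-th powers of
nonnegative numbers is at most the `2λ`-th power of their sum; taking square roots gives the claim. -/

lemma summable_zetaR_terms {β : ℝ} (hβ : 1 < β) :
    Summable (fun k : ℕ => ((k : ℝ) + 1) ^ (-β)) := by
  have hshift := (summable_nat_add_iff 1).2 (Real.summable_nat_rpow.2 (by linarith : -β < -1))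
  exact hshift.congr fun k => by push_cast; rfl

lemma one_le_zetaR {β : ℝ} (hβ : 1 < β) : 1 ≤ zetaR β := by
  have h := (summable_zetaR_terms hβ).le_tsum 0 fun k _ => by positivity
  simpa [zetaR] using h

lemma zetaR_le_zetaR_of_le {β₁ β₂ : ℝ} (hβ₁ : 1 < β₁) (hβ : β₁ ≤ β₂) : zetaR β₂ ≤ zetaR β₁ :=
  (summable_zetaR_terms (hβ₁.trans_le hβ)).tsum_le_tsum
    (fun k => Real.rpow_le_rpow_of_exponent_le (by linarith [k.cast_nonneg (α := ℝ)])
      (neg_le_neg hβ))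
    (summable_zetaR_terms hβ₁)

lemma sum_rpow_le_rpow_sum {ι : Type*} (s : Finset ι) {f : ι → ℝ} (hf : ∀ i ∈ s, 0 ≤ f i)
    {p : ℝ} (hp : 1 ≤ p) : ∑ i ∈ s, f i ^ p ≤ (∑ i ∈ s, f i) ^ p := by
  induction s using Finset.induction_on with
  | empty => simp [Real.zero_rpow (by linarith : p ≠ 0)]
  | insert a s ha ih =>
    rw [Finset.forall_mem_insert] at hf
    rw [Finset.sum_insert ha, Finset.sum_insert ha]
    calc f a ^ p + ∑ i ∈ s, f i ^ p ≤ f a ^ p + (∑ i ∈ s, f i) ^ p := by gcongr; exact ih hf.2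
      _ ≤ (f a + ∑ i ∈ s, f i) ^ p :=
        Real.add_rpow_le_rpow_add hf.1 (Finset.sum_nonneg hf.2) hp

lemma sq_mul_pow_le_rpow {g c c' lam : ℝ} (hg : 0 ≤ g) (hc : 1 ≤ c) (hcc' : c ≤ c')
    (hlam : 1 / 2 ≤ lam) (n : ℕ) :
    g ^ 2 * c ^ n ≤ (g ^ (1 / lam) * c' ^ n) ^ (2 * lam) := by
  have hc' : 1 ≤ c' ^ n := one_le_pow₀ (hc.trans hcc')
  have hg_rpow : (g ^ (1 / lam)) ^ (2 * lam) = g ^ 2 := by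
    rw [← Real.rpow_mul hg, one_div_mul_eq_div, mul_div_cancel_right₀ _ (by linarith)]
    exact Real.rpow_two g
  rw [Real.mul_rpow (by positivity) (by positivity), hg_rpow]
  gcongr
  calc c ^ n ≤ c' ^ n := pow_le_pow_left₀ (by linarith) hcc' n
    _ ≤ (c' ^ n) ^ (2 * lam) := Real.self_le_rpow_of_one_le hc' (by linarith)

lemma sqrt_sum_le_rpow_sum {ι : Type*} (s : Finset ι) {a b : ι → ℝ} (hb : ∀ i ∈ s, 0 ≤ b i)
    {lam : ℝ} (hlam : 1 / 2 ≤ lam) (hab : ∀ i ∈ s, a i ≤ b i ^ (2 * lam)) :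
    √(∑ i ∈ s, a i) ≤ (∑ i ∈ s, b i) ^ lam := by
  have hsum : ∑ i ∈ s, a i ≤ ((∑ i ∈ s, b i) ^ lam) ^ 2 := by
    rw [← Real.rpow_natCast, ← Real.rpow_mul (Finset.sum_nonneg hb), Nat.cast_two, mul_comm lam]
    exact (Finset.sum_le_sum hab).trans (sum_rpow_le_rpow_sum s hb (by linarith))
  exact Real.sqrt_le_iff.2 ⟨Real.rpow_nonneg (Finset.sum_nonneg hb) _, hsum⟩

theorem stmt_11_general (d : ℕ) (α : ℝ) (γ : Finset (Fin d) → ℝ)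
    (hγ : ∀ u : Finset (Fin d), u.Nonempty → 0 < γ u ∧ γ u ≤ 1)
    (lam : ℝ) (hlam : lam ∈ Set.Ico (1 / 2 : ℝ) α) :
    Real.sqrt (∑ u ∈ Finset.univ.filter (fun u : Finset (Fin d) => u.Nonempty),
        γ u ^ 2 * (2 * zetaR (2 * α)) ^ u.card) ≤
      (Vd d (α / lam) (fun u => γ u ^ (1 / lam))) ^ lam := by
  obtain ⟨hlam_ge, hlam_lt⟩ := hlam
  have hlam_pos : 0 < lam := by linarith
  have hc : 1 ≤ 2 * zetaR (2 * α) := by linarith [one_le_zetaR (by linarith : 1 < 2 * α)]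
  have hcc' : 2 * zetaR (2 * α) ≤ 2 * zetaR (α / lam) := by
    gcongr
    exact zetaR_le_zetaR_of_le ((lt_div_iff₀ hlam_pos).2 (by linarith))
      ((div_le_iff₀ hlam_pos).2 (by nlinarith))
  have hγ_nonneg (u) (hu : u ∈ Finset.univ.filter (fun u : Finset (Fin d) => u.Nonempty)) :
      0 ≤ γ u := (hγ u (Finset.mem_filter.1 hu).2).1.le
  refine sqrt_sum_le_rpow_sum _ (fun u hu => ?_) hlam_ge
    (fun u hu => sq_mul_pow_le_rpow (hγ_nonneg u hu) hc hcc' hlam_ge u.card)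
  exact mul_nonneg (Real.rpow_nonneg (hγ_nonneg u hu) _) (pow_nonneg (by linarith) _)

/-- the Cauchy–Schwarz constant is bounded by `V_d(α/λ, γ^{1/λ})^λ`. -/
theorem stmt_11 (d : ℕ) (α : ℝ) (hα : 1 / 2 < α) (γ : Finset (Fin d) → ℝ)
    (hγ : ∀ u : Finset (Fin d), u.Nonempty → 0 < γ u ∧ γ u ≤ 1)
    (lam : ℝ) (hlam : lam ∈ Set.Ico (1 / 2 : ℝ) α) :
    Real.sqrt (∑ u ∈ Finset.univ.filter (fun u : Finset (Fin d) => u.Nonempty),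
        γ u ^ 2 * (2 * zetaR (2 * α)) ^ u.card) ≤
      (Vd d (α / lam) (fun u => γ u ^ (1 / lam))) ^ lam :=
  stmt_11_general d α γ hγ lam hlam
end
end

section
/- Let N be an odd natural number and let a_1,…,a_N be complex numbers. Then |median_ℂ{a_1,…,a_N}| ≤ √2 · median{|a_1|,…,|a_N|}. -/
open scoped BigOperators Classical

noncomputable section

/-!
Pointwise `|Re aₖ| ≤ |aₖ|` and `|Im aₖ| ≤ |aₖ|`, so it suffices that `|median f| ≤ median g`
whenever `|fₖ| ≤ gₖ`; then `|median_ℂ a| ≤ √2 · max (|median Re a|, |median Im a|)` finishes.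
For `N = 2i + 1`, at least `i + 1` of the values are `≤` the median and at least `i + 1` are `≥`
it, so any two such families of indices meet. This gives monotonicity of the median and
`-median g ≤ median (-g)`, hence both bounds on `median f`.
-/

open Finset

namespace List

variable {α : Type*} [Preorder α] [DecidableLE α] {s : List α}

theorem Pairwise.succ_le_countP_le_getElem (hs : s.Pairwise (· ≤ ·)) {i : ℕ}
    (hi : i < s.length) : i + 1 ≤ s.countP (· ≤ s[i]) := by
  have hle : ∀ x ∈ s.take (i + 1), x ≤ s[i] := by
    intro x hx
    obtain ⟨j, hj, rfl⟩ := getElem_of_mem hx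
    rw [length_take] at hj
    rw [getElem_take]
    exact hs.rel_get_of_le (a := ⟨j, by omega⟩) (b := ⟨i, hi⟩) (by simp only [Fin.mk_le_mk]; omega)
  calc i + 1 = (s.take (i + 1)).countP (· ≤ s[i]) := by
        rw [countP_eq_length.mpr (by simpa using hle), length_take]; omega
    _ ≤ _ := (take_sublist _ _).countP_le

theorem Pairwise.length_sub_le_countP_getElem_le (hs : s.Pairwise (· ≤ ·)) {i : ℕ}
    (hi : i < s.length) : s.length - i ≤ s.countP (s[i] ≤ ·) := by
  have hge : ∀ x ∈ s.drop i, s[i] ≤ x := by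
    intro x hx
    obtain ⟨j, hj, rfl⟩ := getElem_of_mem hx
    rw [length_drop] at hj
    rw [getElem_drop]
    exact hs.rel_get_of_le (a := ⟨i, hi⟩) (b := ⟨i + j, by omega⟩) (by simp)
  calc s.length - i = (s.drop i).countP (s[i] ≤ ·) := by
        rw [countP_eq_length.mpr (by simpa using hge), length_drop]
    _ ≤ _ := (drop_sublist _ _).countP_le

end List

section Median

variable {N : ℕ}

theorem card_filter_eq_countP_insertionSort (f : Fin N → ℝ) (p : ℝ → Prop) [DecidablePred p] :
    #{k | p (f k)} = (List.insertionSort (· ≤ ·) (List.ofFn f)).countP (p ·) := by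
  rw [(List.perm_insertionSort _ _).countP_eq, ← Multiset.coe_countP, ← Fin.univ_val_map,
    Multiset.countP_map, ← Finset.filter_val, Finset.card_val]

theorem medianR_eq_getElem (hN : 0 < N) (f : Fin N → ℝ) :
    medianR f = (List.insertionSort (· ≤ ·) (List.ofFn f))[(N - 1) / 2]'(by simp; omega) :=
  List.getD_eq_getElem _ _ _

theorem succ_half_le_card_filter_le_medianR (hN : 0 < N) (f : Fin N → ℝ) :
    (N - 1) / 2 + 1 ≤ #{k | f k ≤ medianR f} := by
  rw [card_filter_eq_countP_insertionSort f (· ≤ medianR f), medianR_eq_getElem hN]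
  exact (List.pairwise_insertionSort _ _).succ_le_countP_le_getElem _

theorem sub_half_le_card_filter_medianR_le (hN : 0 < N) (f : Fin N → ℝ) :
    N - (N - 1) / 2 ≤ #{k | medianR f ≤ f k} := by
  rw [card_filter_eq_countP_insertionSort f (medianR f ≤ ·), medianR_eq_getElem hN]
  simpa using (List.pairwise_insertionSort _ _).length_sub_le_countP_getElem_le
    (by simp; omega : (N - 1) / 2 < (List.insertionSort (· ≤ ·) (List.ofFn f)).length)

theorem exists_and_of_lt_card_filter_add_card_filter {p q : Fin N → Prop} [DecidablePred p] [DecidablePred q]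
    (h : N < #{k | p k} + #{k | q k}) : ∃ k, p k ∧ q k := by
  obtain ⟨k, hk⟩ := inter_nonempty_of_card_lt_card_add_card (subset_univ {k | p k})
    (subset_univ {k | q k}) (by rwa [card_univ, Fintype.card_fin])
  simp only [mem_inter, mem_filter_univ] at hk
  exact ⟨k, hk⟩

theorem medianR_mono : Monotone (medianR : (Fin N → ℝ) → ℝ) := by
  intro f g hfg
  rcases N.eq_zero_or_pos with rfl | hN
  · rfl
  have hcard : N < #{k | medianR f ≤ f k} + #{k | g k ≤ medianR g} := by
    have := sub_half_le_card_filter_medianR_le hN f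
    have := succ_half_le_card_filter_le_medianR hN g
    omega
  obtain ⟨k, hfk, hgk⟩ := exists_and_of_lt_card_filter_add_card_filter hcard
  exact hfk.trans ((hfg k).trans hgk)

theorem neg_medianR_le_medianR_neg (hN : Odd N) (f : Fin N → ℝ) :
    -medianR f ≤ medianR (-f) := by
  have hcard : N < #{k | f k ≤ medianR f} + #{k | (-f) k ≤ medianR (-f)} := by
    have := succ_half_le_card_filter_le_medianR hN.pos f
    have := succ_half_le_card_filter_le_medianR hN.pos (-f)
    obtain ⟨m, rfl⟩ := hN
    omega
  obtain ⟨k, hfk, hgk⟩ := exists_and_of_lt_card_filter_add_card_filter hcard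
  exact (neg_le_neg hfk).trans hgk

theorem abs_medianR_le (hN : Odd N) {f g : Fin N → ℝ} (h : ∀ k, |f k| ≤ g k) :
    |medianR f| ≤ medianR g := by
  refine abs_le.mpr ⟨?_, medianR_mono fun k => (le_abs_self _).trans (h k)⟩
  calc -medianR g ≤ medianR (-g) := neg_medianR_le_medianR_neg hN g
    _ ≤ medianR f := medianR_mono fun k => (neg_le_neg (h k)).trans (neg_abs_le (f k))

end Median

/-- complex version of the median inequality, with a factor `√2`. -/
theorem stmt_13 (N : ℕ) (hN : Odd N) (a : Fin N → ℂ) :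
    ‖medianC a‖ ≤ Real.sqrt 2 * medianR (fun k => ‖a k‖) := by
  have hre : (medianC a).re = medianR fun k => (a k).re := by simp [medianC]
  have him : (medianC a).im = medianR fun k => (a k).im := by simp [medianC]
  refine (Complex.norm_le_sqrt_two_mul_max _).trans (mul_le_mul_of_nonneg_left ?_ (by positivity))
  rw [hre, him]
  exact max_le (abs_medianR_le hN fun k => Complex.abs_re_le_norm _)
    (abs_medianR_le hN fun k => Complex.abs_im_le_norm _)

end
end
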